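/- Let ε ∈ (0, 1) and let ε ≤ t₁ < t₂ ≤ 1. Then the spiral map satisfies ‖g_ε(t₁) − g_ε(t₂)‖ ≤ (t₂ − t₁)·√(1 + (π/ln(1/ε))²) ≤ (t₂ − t₁)·(1 + π²/(2·ln²(1/ε))). -/

import Mathlib

/-- The point `(a, b) ∈ ℝ²` (Euclidean plane). -/
noncomputable def pt (a b : ℝ) : EuclideanSpace ℝ (Fin 2) :=
  (WithLp.equiv 2 (Fin 2 → ℝ)).symm ![a, b]

/-- The angle `φ_ε(t) = π ln(1/|t|) / ln(1/ε)`. -/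
noncomputable def spiralPhi (ε t : ℝ) : ℝ :=
  Real.pi * Real.log (1 / |t|) / Real.log (1 / ε)

/-- The spiral map `g_ε : ℝ → ℝ²`. -/
noncomputable def spiral (ε t : ℝ) : EuclideanSpace ℝ (Fin 2) :=
  if 1 ≤ |t| then pt t 0
  else if |t| ≤ ε then pt (-t) 0
  else pt (t * Real.cos (spiralPhi ε t)) (t * Real.sin (spiralPhi ε t))

/-!
On `[ε, 1]` the spiral map is the logarithmic spiral `t ↦ t · e^{-iπ log t / log(1/ε)}`: its angle
vanishes at `t = 1` and equals `π` at `t = ε`, which matches the two outer branches. A logarithmic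
spiral `t · e^{ic log t}` has constant speed `√(1 + c²)`, so the mean value inequality gives the
first bound, and `√(1 + x) ≤ 1 + x / 2` gives the second.
-/

open Real Set

lemma pt_eq_smul_add (a b : ℝ) : pt a b = a • pt 1 0 + b • pt 0 1 := by
  ext i; fin_cases i <;> simp [pt]

lemma norm_pt (a b : ℝ) : ‖pt a b‖ = √(a ^ 2 + b ^ 2) := by
  simp [EuclideanSpace.norm_eq, pt, Fin.sum_univ_two, sq_abs]

noncomputable def logSpiral (c t : ℝ) : EuclideanSpace ℝ (Fin 2) :=
  pt (t * cos (c * log t)) (t * sin (c * log t))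

lemma hasDerivAt_logSpiral (c : ℝ) {t : ℝ} (ht : 0 < t) :
    HasDerivAt (logSpiral c)
      (pt (cos (c * log t) - c * sin (c * log t)) (sin (c * log t) + c * cos (c * log t))) t := by
  have hθ : HasDerivAt (fun s => c * log s) (c * t⁻¹) t :=
    (hasDerivAt_log ht.ne').const_mul c
  have hx : HasDerivAt (fun s => s * cos (c * log s)) (cos (c * log t) - c * sin (c * log t)) t := by
    refine ((hasDerivAt_id' t).mul hθ.cos).congr_deriv ?_
    field_simp
    ring
  have hy : HasDerivAt (fun s => s * sin (c * log s)) (sin (c * log t) + c * cos (c * log t)) t := by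
    refine ((hasDerivAt_id' t).mul hθ.sin).congr_deriv ?_
    field_simp
  have h := (hx.smul_const (pt 1 0)).add (hy.smul_const (pt 0 1))
  rw [← pt_eq_smul_add] at h
  exact h.congr_of_eventuallyEq (.of_forall fun s => pt_eq_smul_add _ _)

lemma norm_deriv_logSpiral (c θ : ℝ) :
    ‖pt (cos θ - c * sin θ) (sin θ + c * cos θ)‖ = √(1 + c ^ 2) := by
  rw [norm_pt]
  congr 1
  linear_combination (1 + c ^ 2) * sin_sq_add_cos_sq θ

lemma norm_logSpiral_sub_le (c : ℝ) {a b : ℝ} (ha : 0 < a) (hab : a ≤ b) :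
    ‖logSpiral c b - logSpiral c a‖ ≤ √(1 + c ^ 2) * (b - a) := by
  refine norm_image_sub_le_of_norm_deriv_le_segment'
    (fun t ht => (hasDerivAt_logSpiral c (ha.trans_le ht.1)).hasDerivWithinAt)
    (fun t _ => (norm_deriv_logSpiral c _).le) b ⟨hab, le_rfl⟩

lemma spiral_eq_logSpiral {ε t : ℝ} (hε : 0 < ε) (hε1 : ε < 1) (ht : t ∈ Icc ε 1) :
    spiral ε t = logSpiral (-(π / log (1 / ε))) t := by
  have ht0 : 0 < t := hε.trans_le ht.1
  have hphi : spiralPhi ε t = -(π / log (1 / ε)) * log t := by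
    rw [spiralPhi, abs_of_pos ht0, one_div, log_inv]
    ring
  unfold spiral
  split_ifs with h1 hεt
  · obtain rfl : t = 1 := le_antisymm ht.2 (by rwa [abs_of_pos ht0] at h1)
    simp [logSpiral]
  · obtain rfl : t = ε := le_antisymm (by rwa [abs_of_pos ht0] at hεt) ht.1
    have hturn : -(π / log (1 / t)) * log t = π := by
      rw [one_div, log_inv]
      field_simp [(log_neg hε hε1).ne]
    rw [logSpiral, hturn, cos_pi, sin_pi]
    simp
  · rw [logSpiral, hphi]

/-- **The spiral map does not expand distances much on `[ε, 1]`.** For `ε ∈ (0,1)` and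
`ε ≤ t₁ < t₂ ≤ 1`,
`‖g_ε t₁ - g_ε t₂‖ ≤ (t₂ - t₁) √(1 + (π/ln(1/ε))²) ≤ (t₂ - t₁)(1 + π²/(2 ln²(1/ε)))`. -/
theorem spiral_expansion_bound (ε : ℝ) (hε : 0 < ε) (hε1 : ε < 1)
    (t₁ t₂ : ℝ) (h₁ : ε ≤ t₁) (h₁₂ : t₁ < t₂) (h₂ : t₂ ≤ 1) :
    ‖spiral ε t₁ - spiral ε t₂‖ ≤
      (t₂ - t₁) * Real.sqrt (1 + (Real.pi / Real.log (1 / ε)) ^ 2) ∧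
    (t₂ - t₁) * Real.sqrt (1 + (Real.pi / Real.log (1 / ε)) ^ 2) ≤
      (t₂ - t₁) * (1 + Real.pi ^ 2 / (2 * (Real.log (1 / ε)) ^ 2)) := by
  set c := -(π / log (1 / ε))
  have hc : c ^ 2 = (π / log (1 / ε)) ^ 2 := neg_sq _
  constructor
  · rw [spiral_eq_logSpiral hε hε1 ⟨h₁, by linarith⟩, spiral_eq_logSpiral hε hε1 ⟨by linarith, h₂⟩,
      norm_sub_rev, mul_comm, ← hc]
    exact norm_logSpiral_sub_le c (hε.trans_le h₁) h₁₂.le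
  · refine mul_le_mul_of_nonneg_left ?_ (by linarith)
    calc √(1 + (π / log (1 / ε)) ^ 2) ≤ 1 + (π / log (1 / ε)) ^ 2 / 2 :=
          sqrt_one_add_le (by linarith [sq_nonneg (π / log (1 / ε))])
      _ = 1 + π ^ 2 / (2 * log (1 / ε) ^ 2) := by ring
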